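/- For every real number t there exists a unique continuous function a_t : ℝ → ℝ such that a_t(x_t(u)) = y_t(u) for all u ∈ ℝ (so the curve A_t is the graph of the continuous function a_t). Moreover, for t = 1 this function satisfies a_1(1) = 1 and a_1(−1) = −1. -/
import Mathlib

/-- The model function `x_t(u) = (15/8)·∫₀ᵘ (s² − t)² ds`. -/
noncomputable def xfun (t u : ℝ) : ℝ := (15/8) * ∫ s in (0:ℝ)..u, (s^2 - t)^2
/-- The model function `y_t(u) = −(1/2)(u³ − 3tu)`. -/
noncomputable def yfun (t u : ℝ) : ℝ := -(1/2) * (u^3 - 3*t*u)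

lemma xfun_eq (t u : ℝ) : xfun t u = (3/8)*u^5 - (5/4)*t*u^3 + (15/8)*t^2*u := by
  have h : ∀ x ∈ Set.uIcc (0:ℝ) u,
      HasDerivAt (fun x : ℝ => x^5/5 - 2*t*x^3/3 + t^2*x) ((x^2 - t)^2) x := by
    intro x _
    have : HasDerivAt (fun x : ℝ => x^5/5 - 2*t*x^3/3 + t^2*x)
        (5*x^4/5 - 2*t*(3*x^2)/3 + t^2*1) x := by
      apply HasDerivAt.add
      · apply HasDerivAt.sub
        · simpa using (hasDerivAt_pow 5 x).div_const 5
        · simpa using ((hasDerivAt_pow 3 x).const_mul (2*t)).div_const 3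
      · simpa using (hasDerivAt_id x).const_mul (t^2)
    convert this using 1; ring
  have hint : IntervalIntegrable (fun s : ℝ => (s^2 - t)^2) MeasureTheory.volume 0 u :=
    (by continuity : Continuous fun s : ℝ => (s^2 - t)^2).intervalIntegrable _ _
  have := intervalIntegral.integral_eq_sub_of_hasDerivAt h hint
  simp only [xfun, this]; ring

lemma xfun_mono (t : ℝ) : StrictMono (xfun t) := by
  intro a b hab
  simp only [xfun_eq]
  have hba : (0:ℝ) < b - a := sub_pos.2 hab
  nlinarith [mul_nonneg hba.le (sq_nonneg ((a+b)^2/4 - t + (b-a)^2/12)),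
    mul_nonneg hba.le (sq_nonneg ((a+b)*(b-a))),
    pow_pos hba 5]

lemma xfun_odd (t u : ℝ) : xfun t (-u) = - xfun t u := by
  simp only [xfun_eq]; ring

lemma xfun_cont (t : ℝ) : Continuous (xfun t) := by
  have : (xfun t) = fun u => (3/8)*u^5 - (5/4)*t*u^3 + (15/8)*t^2*u := funext (xfun_eq t)
  rw [this]; continuity

lemma xfun_big (t u : ℝ) (h1 : 1 ≤ u) (h2 : 4*|t| ≤ u) : u/16 ≤ xfun t u := by
  have ht : |t| ≥ 0 := abs_nonneg t
  have h0 : 0 < u := lt_of_lt_of_le one_pos h1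
  have ht2 : t ≤ |t| := le_abs_self t
  have ht3 : -|t| ≤ t := neg_abs_le t
  rw [xfun_eq]
  have hcube : (0:ℝ) < u^3 := pow_pos h0 3
  have htu : t * u^3 ≤ (u/4) * u^3 :=
    mul_le_mul_of_nonneg_right (by linarith) hcube.le
  have hu5 : u ≤ u^5 := le_self_pow₀ h1 (by norm_num)
  nlinarith [mul_nonneg (sq_nonneg t) h0.le]

lemma xfun_surj (t : ℝ) : Function.Surjective (xfun t) := by
  intro y
  set b : ℝ := max (max 1 (4*|t|)) (16*|y|) with hb
  have hb1 : 1 ≤ b := le_trans (le_max_left _ _) (le_max_left _ _)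
  have hb2 : 4*|t| ≤ b := le_trans (le_max_right _ _) (le_max_left _ _)
  have hb3 : 16*|y| ≤ b := le_max_right _ _
  have hub : |y| ≤ xfun t b := le_trans (by linarith) (xfun_big t b hb1 hb2)
  have hlb : xfun t (-b) ≤ y := by
    rw [xfun_odd]
    have := neg_abs_le y
    linarith
  have hy : y ∈ Set.Icc (xfun t (-b)) (xfun t b) :=
    ⟨hlb, le_trans (le_abs_self y) hub⟩
  have := intermediate_value_Icc (by linarith : (-b:ℝ) ≤ b) (xfun_cont t).continuousOn
  obtain ⟨u, _, hu⟩ := this hy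
  exact ⟨u, hu⟩

/-- For every real `t` there is a unique continuous `a_t : ℝ → ℝ` with
`a_t(x_t(u)) = y_t(u)` for all `u` (so the curve `A_t` is the graph of `a_t`);
moreover for `t = 1` this function satisfies `a_1(1) = 1` and `a_1(−1) = −1`. -/
theorem exists_unique_graph_function :
    (∀ t : ℝ, ∃! a : ℝ → ℝ, Continuous a ∧ ∀ u : ℝ, a (xfun t u) = yfun t u) ∧
    (∀ a : ℝ → ℝ, (Continuous a ∧ ∀ u : ℝ, a (xfun 1 u) = yfun 1 u) →
      a 1 = 1 ∧ a (-1) = -1) := by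
  have key : ∀ t : ℝ, ∃! a : ℝ → ℝ, Continuous a ∧ ∀ u : ℝ, a (xfun t u) = yfun t u := by
    intro t
    let e : ℝ ≃o ℝ := StrictMono.orderIsoOfSurjective (xfun t) (xfun_mono t) (xfun_surj t)
    have he : ∀ u, e u = xfun t u := fun u => rfl
    refine ⟨fun x => yfun t (e.symm x), ⟨?_, ?_⟩, ?_⟩
    · have hy : Continuous (yfun t) := by
        have : (yfun t) = fun u => -(1/2) * (u^3 - 3*t*u) := rfl
        rw [this]; continuity
      exact hy.comp e.symm.continuous
    · intro u
      have : e.symm (xfun t u) = u := by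
        rw [← he]; exact e.symm_apply_apply u
      simp [this]
    · intro b hb
      funext x
      obtain ⟨u, hu⟩ := xfun_surj t x
      have h1 := hb.2 u
      have : e.symm x = u := by
        rw [← hu, ← he]; exact e.symm_apply_apply u
      show b x = yfun t (e.symm x)
      rw [this, ← hu, h1]
  refine ⟨key, fun a ha => ?_⟩
  have h1 : xfun 1 1 = 1 := by rw [xfun_eq]; ring
  have h2 : xfun 1 (-1) = -1 := by rw [xfun_eq]; ring
  constructor
  · have := ha.2 1; rw [h1] at this; rw [this]; simp [yfun]; ring
  · have := ha.2 (-1); rw [h2] at this; rw [this]; simp [yfun]; ring
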